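/- arXiv:1801.07171 — 2 statements merged into one kernel-verified Lean document; each statement's English description precedes it below -/
import Mathlib

section
/- Let σ = -1 and let q_1,…,q_n be a negative hyperbolic rotopulsator of the curved n-body problem such that the functions ρ_1,…,ρ_n are all equal to one common function ρ. Then for every i ∈ {1,…,n} and every t, 2ρ'(t)φ'(t) + ρ(t)φ''(t) = Σ_{j≠i} m_j·ρ(t)·sinh(β_j − β_i) / ((q_i(t)⊙q_j(t))² − 1)^{3/2}. -/
/-!
Project the equations of motion of the two hyperbolic coordinates `q_{i3} = ρ sinh ψ_i`,
`q_{i4} = ρ cosh ψ_i` (with `ψ_i = φ + β_i`) onto the direction `(cosh ψ_i, -sinh ψ_i)`.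
On the left this extracts the tangential acceleration `2ρ'φ' + ρφ''` of hyperbolic polar
coordinates. On the right the velocity term is a multiple of `q_i`, whose projection vanishes,
and the projection of `q_j` is `ρ sinh (ψ_j - ψ_i) = ρ sinh (β_j - β_i)`.
-/

open Real Finset

/-- The "curved inner product" `x ⊙ y = x₁y₁ + x₂y₂ + x₃y₃ + σx₄y₄` on `ℝ⁴`. -/
noncomputable def odot (σ : ℝ) (x y : Fin 4 → ℝ) : ℝ :=
  x 0 * y 0 + x 1 * y 1 + x 2 * y 2 + σ * x 3 * y 3

section HyperbolicPolar

variable {ρ ψ : ℝ → ℝ} (hρ : Differentiable ℝ ρ) (hρ' : Differentiable ℝ (deriv ρ))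
  (hψ : Differentiable ℝ ψ) (hψ' : Differentiable ℝ (deriv ψ))

include hρ hρ' hψ hψ'

theorem deriv_deriv_mul_sinh_comp (t : ℝ) :
    deriv (deriv fun u => ρ u * sinh (ψ u)) t =
      deriv (deriv ρ) t * sinh (ψ t) + 2 * deriv ρ t * cosh (ψ t) * deriv ψ t +
        ρ t * (sinh (ψ t) * deriv ψ t ^ 2 + cosh (ψ t) * deriv (deriv ψ) t) := by
  have hfirst : (deriv fun u => ρ u * sinh (ψ u)) =
      fun u => deriv ρ u * sinh (ψ u) + ρ u * (cosh (ψ u) * deriv ψ u) :=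
    funext fun u => ((hρ u).hasDerivAt.mul (hψ u).hasDerivAt.sinh).deriv
  rw [hfirst]
  have hsecond := ((hρ' t).hasDerivAt.mul (hψ t).hasDerivAt.sinh).add
    ((hρ t).hasDerivAt.mul ((hψ t).hasDerivAt.cosh.mul (hψ' t).hasDerivAt))
  exact hsecond.deriv.trans (by simp only [Pi.mul_apply]; ring)

theorem deriv_deriv_mul_cosh_comp (t : ℝ) :
    deriv (deriv fun u => ρ u * cosh (ψ u)) t =
      deriv (deriv ρ) t * cosh (ψ t) + 2 * deriv ρ t * sinh (ψ t) * deriv ψ t +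
        ρ t * (cosh (ψ t) * deriv ψ t ^ 2 + sinh (ψ t) * deriv (deriv ψ) t) := by
  have hfirst : (deriv fun u => ρ u * cosh (ψ u)) =
      fun u => deriv ρ u * cosh (ψ u) + ρ u * (sinh (ψ u) * deriv ψ u) :=
    funext fun u => ((hρ u).hasDerivAt.mul (hψ u).hasDerivAt.cosh).deriv
  rw [hfirst]
  have hsecond := ((hρ' t).hasDerivAt.mul (hψ t).hasDerivAt.cosh).add
    ((hρ t).hasDerivAt.mul ((hψ t).hasDerivAt.sinh.mul (hψ' t).hasDerivAt))
  exact hsecond.deriv.trans (by simp only [Pi.mul_apply]; ring)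

theorem cosh_mul_deriv_deriv_sinh_sub_sinh_mul_deriv_deriv_cosh (t : ℝ) :
    cosh (ψ t) * deriv (deriv fun u => ρ u * sinh (ψ u)) t
        - sinh (ψ t) * deriv (deriv fun u => ρ u * cosh (ψ u)) t =
      2 * deriv ρ t * deriv ψ t + ρ t * deriv (deriv ψ) t := by
  rw [deriv_deriv_mul_sinh_comp hρ hρ' hψ hψ', deriv_deriv_mul_cosh_comp hρ hρ' hψ hψ']
  linear_combination (2 * deriv ρ t * deriv ψ t + ρ t * deriv (deriv ψ) t) *
    cosh_sq_sub_sinh_sq (ψ t)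

end HyperbolicPolar

theorem negative_hyperbolic_rotopulsator_common_rho_sinh_sum_identity_general
    (σ : ℝ) (hσ : σ = -1) (n : ℕ)
    (q : Fin n → ℝ → Fin 4 → ℝ) (m : Fin n → ℝ)
    -- the equations of motion of the curved n-body problem
    (heom : ∀ i t k,
      deriv (deriv fun s => q i s k) t =
        (∑ j ∈ Finset.univ.erase i,
          m j * (q j t k - σ * odot σ (q i t) (q j t) * q i t k) /
            (σ - σ * (odot σ (q i t) (q j t)) ^ 2) ^ ((3 : ℝ) / 2))
        - σ * odot σ (fun l => deriv (fun s => q i s l) t)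
            (fun l => deriv (fun s => q i s l) t) * q i t k)
    -- negative hyperbolic rotopulsator structure with common `ρ`
    (ρ φ : ℝ → ℝ)
    (hρ1 : Differentiable ℝ ρ) (hρ2 : Differentiable ℝ (deriv ρ))
    (hφ1 : Differentiable ℝ φ) (hφ2 : Differentiable ℝ (deriv φ))
    (β : Fin n → ℝ)
    (hrep : ∀ i t, q i t 2 = ρ t * Real.sinh (φ t + β i) ∧
                   q i t 3 = ρ t * Real.cosh (φ t + β i)) :
    ∀ (i : Fin n) (t : ℝ),
      2 * deriv ρ t * deriv φ t + ρ t * deriv (deriv φ) t =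
        ∑ j ∈ Finset.univ.erase i,
          m j * ρ t * Real.sinh (β j - β i) /
            ((odot σ (q i t) (q j t)) ^ 2 - 1) ^ ((3 : ℝ) / 2) := by
  subst hσ
  intro i t
  set c := cosh (φ t + β i)
  set s := sinh (φ t + β i)
  have hproj : ∀ j, c * q j t 2 - s * q j t 3 = ρ t * sinh (β j - β i) := fun j => by
    rw [(hrep j t).1, (hrep j t).2, show β j - β i = (φ t + β j) - (φ t + β i) by ring,
      sinh_sub]
    ring
  have hproj_self : c * q i t 2 - s * q i t 3 = 0 := by simpa using hproj i
  have hacc : c * deriv (deriv fun u => q i u 2) t - s * deriv (deriv fun u => q i u 3) t =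
      2 * deriv ρ t * deriv φ t + ρ t * deriv (deriv φ) t := by
    have hq2 : (fun u => q i u 2) = fun u => ρ u * sinh (φ u + β i) :=
      funext fun u => (hrep i u).1
    have hq3 : (fun u => q i u 3) = fun u => ρ u * cosh (φ u + β i) :=
      funext fun u => (hrep i u).2
    have hψ' : Differentiable ℝ (deriv fun u => φ u + β i) := by
      rwa [deriv_add_const']
    rw [hq2, hq3, cosh_mul_deriv_deriv_sinh_sub_sinh_mul_deriv_deriv_cosh hρ1 hρ2
      (hφ1.add_const (β i)) hψ', deriv_add_const']
  rw [← hacc, heom i t 2, heom i t 3, mul_sub, mul_sub, Finset.mul_sum, Finset.mul_sum,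
    sub_sub_sub_comm, ← Finset.sum_sub_distrib]
  set K := odot (-1) (fun l => deriv (fun u => q i u l) t) (fun l => deriv (fun u => q i u l) t)
  rw [show c * (-1 * K * q i t 2) - s * (-1 * K * q i t 3) = 0 by
    linear_combination (-K) * hproj_self, sub_zero]
  refine Finset.sum_congr rfl fun j _ => ?_
  set α := odot (-1) (q i t) (q j t)
  rw [show (-1 : ℝ) - -1 * α ^ 2 = α ^ 2 - 1 by ring]
  calc _ = m j * ((c * q j t 2 - s * q j t 3) + α * (c * q i t 2 - s * q i t 3)) /
        (α ^ 2 - 1) ^ ((3 : ℝ) / 2) := by ring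
    _ = _ := by rw [hproj j, hproj_self]; ring

/-- If `q₁,…,qₙ` is a negative hyperbolic rotopulsator of the curved `n`-body problem
whose functions `ρ₁,…,ρₙ` are all equal to one common function `ρ`, then for every
`i` and every `t`,
`2ρ'φ' + ρφ'' = Σ_{j≠i} m_j ρ sinh(β_j − β_i) / ((q_i ⊙ q_j)² − 1)^{3/2}`. -/
theorem negative_hyperbolic_rotopulsator_common_rho_sinh_sum_identity
    (σ : ℝ) (hσ : σ = -1) (n : ℕ) (hn : 1 ≤ n)
    (q : Fin n → ℝ → Fin 4 → ℝ) (m : Fin n → ℝ)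
    (hm : ∀ i, 0 < m i)
    -- the curves are twice differentiable
    (hq1 : ∀ i k, Differentiable ℝ fun t => q i t k)
    (hq2 : ∀ i k, Differentiable ℝ (deriv fun t => q i t k))
    -- the bodies move on `M³_σ`
    (hsphere : ∀ i t, odot σ (q i t) (q i t) = σ)
    -- singularity avoidance: `σ - σ(q_i ⊙ q_j)² > 0` for `i ≠ j`
    (hsep : ∀ i j, i ≠ j → ∀ t, 0 < σ - σ * (odot σ (q i t) (q j t)) ^ 2)
    -- the equations of motion of the curved n-body problem
    (heom : ∀ i t k,
      deriv (deriv fun s => q i s k) t =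
        (∑ j ∈ Finset.univ.erase i,
          m j * (q j t k - σ * odot σ (q i t) (q j t) * q i t k) /
            (σ - σ * (odot σ (q i t) (q j t)) ^ 2) ^ ((3 : ℝ) / 2))
        - σ * odot σ (fun l => deriv (fun s => q i s l) t)
            (fun l => deriv (fun s => q i s l) t) * q i t k)
    -- negative hyperbolic rotopulsator structure with common `ρ`
    (ρ φ : ℝ → ℝ) (hρpos : ∀ t, 0 < ρ t)
    (hρ1 : Differentiable ℝ ρ) (hρ2 : Differentiable ℝ (deriv ρ))
    (hφ1 : Differentiable ℝ φ) (hφ2 : Differentiable ℝ (deriv φ))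
    (β : Fin n → ℝ)
    (hrep : ∀ i t, q i t 2 = ρ t * Real.sinh (φ t + β i) ∧
                   q i t 3 = ρ t * Real.cosh (φ t + β i)) :
    ∀ (i : Fin n) (t : ℝ),
      2 * deriv ρ t * deriv φ t + ρ t * deriv (deriv φ) t =
        ∑ j ∈ Finset.univ.erase i,
          m j * ρ t * Real.sinh (β j - β i) /
            ((odot σ (q i t) (q j t)) ^ 2 - 1) ^ ((3 : ℝ) / 2) :=
  negative_hyperbolic_rotopulsator_common_rho_sinh_sum_identity_general σ hσ n q m heom ρ φ hρ1 hρ2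
    hφ1 hφ2 β hrep
end

section
/- Let σ = 1 and f(x) = (x² − x⁴/4)^{−3/2}. Fix n ≥ 2, masses m_1,…,m_n > 0 and a constant A > 0. Then there is at most one tuple (r, α_1,…,α_n) with 0 < r < (1/5)√10 and 0 = α_1 < α_2 < … < α_n < 2π such that for every i ∈ {1,…,n}: A² = Σ_{j≠i} m_j·(1 − cos(α_j − α_i))·f(√2·r·√(1 − cos(α_j − α_i))) and 0 = Σ_{j≠i} m_j·sin(α_j − α_i)·f(√2·r·√(1 − cos(α_j − α_i))). In other words, for each fixed set of masses and fixed angular velocity, there is at most one positive elliptic relative equilibrium of this polygonal class whose size r lies below the stated bound, up to rotation. -/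
open Real Finset

/-!
Write `Ψ` for a primitive of `x ↦ x * fpos x` and `P(θ, ρ) = Ψ(2ρ sin(θ/2))` for the potential of
a pair of bodies at angular gap `θ` on the circle of radius `ρ`. For two solutions `(r, α)` and
`(r', α')` with gaps `θ_ij`, `θ'_ij`, sum
`m_i m_j ⟪∇P(θ_ij, r) - ∇P(θ'_ij, r'), (θ_ij - θ'_ij, r - r')⟫` over all ordered pairs.
Since `θ_ij - θ'_ij = δ_j - δ_i` with `δ = α - α'`, and `∂_θ P` is odd under `θ ↦ 2π - θ`, the
tangential equations kill the angular part, and the radial equations leave `2 A² (Σ m) (r - r')²`.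
On the other hand `P` is strictly concave on `(0, 2π) × (0, √10/5)`: there the chord satisfies
`x² < 8/5`, where `x * fpos x` decreases, and the Hessian of `P` is negative definite. So every
term is `≤ 0`, with equality only if the two points agree; hence `r = r'` and the gaps
`θ_1j = α_j` agree.
-/

/-- The reduced force-law factor of the curved n-body problem with `σ = 1`. -/
noncomputable def fpos (x : ℝ) : ℝ := (x ^ 2 - x ^ 4 / 4) ^ (-(3 : ℝ) / 2)

lemma fpos_eq_mul_rpow {x : ℝ} (hw : 0 < x ^ 2 - x ^ 4 / 4) :
    fpos x = (x ^ 2 - x ^ 4 / 4) * (x ^ 2 - x ^ 4 / 4) ^ (-(5 : ℝ) / 2) := by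
  rw [fpos, show -(3 : ℝ) / 2 = 1 + -(5 : ℝ) / 2 by norm_num, rpow_add hw, rpow_one]

lemma hasDerivAt_mul_fpos {x : ℝ} (hw : 0 < x ^ 2 - x ^ 4 / 4) :
    HasDerivAt (fun y => y * fpos y)
      (x ^ 2 * (5 * x ^ 2 - 8) / 4 * (x ^ 2 - x ^ 4 / 4) ^ (-(5 : ℝ) / 2)) x := by
  have hw' : HasDerivAt (fun y : ℝ => y ^ 2 - y ^ 4 / 4) (2 * x - x ^ 3) x :=
    ((hasDerivAt_pow 2 x).sub ((hasDerivAt_pow 4 x).div_const 4)).congr_deriv (by ring)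
  have hf := hw'.rpow_const (p := -(3 : ℝ) / 2) (Or.inl hw.ne')
  refine ((hasDerivAt_id' x).mul hf).congr_deriv ?_
  rw [← fpos, fpos_eq_mul_rpow hw, show -(3 : ℝ) / 2 - 1 = -(5 : ℝ) / 2 by norm_num]
  ring

lemma sin_eq_two_mul_sin_half_mul_cos_half (θ : ℝ) : sin θ = 2 * sin (θ / 2) * cos (θ / 2) := by
  rw [← sin_two_mul, mul_div_cancel₀ θ two_ne_zero]

lemma one_sub_cos_eq_two_mul_sin_half_sq (θ : ℝ) : 1 - cos θ = 2 * sin (θ / 2) ^ 2 := by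
  nth_rw 1 [← mul_div_cancel₀ θ two_ne_zero]
  rw [cos_two_mul', cos_sq']
  ring

noncomputable def chord (θ ρ : ℝ) : ℝ := 2 * ρ * sin (θ / 2)

/-- `gradAngle` and `gradRadius` are the partial derivatives in `θ` and `ρ` of the pair potential
`Ψ (chord θ ρ)`, where `Ψ' x = x * fpos x`. -/
noncomputable def gradAngle (θ ρ : ℝ) : ℝ :=
  ρ * cos (θ / 2) * (chord θ ρ * fpos (chord θ ρ))

noncomputable def gradRadius (θ ρ : ℝ) : ℝ :=
  2 * sin (θ / 2) * (chord θ ρ * fpos (chord θ ρ))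

/-- The second derivative of the pair potential at `(θ, ρ)` in the direction `(a, d)`; its first
factor is the derivative of `x * fpos x` at `x = chord θ ρ`. -/
noncomputable def hessForm (θ ρ a d : ℝ) : ℝ :=
  chord θ ρ ^ 2 * (5 * chord θ ρ ^ 2 - 8) / 4
      * (chord θ ρ ^ 2 - chord θ ρ ^ 4 / 4) ^ (-(5 : ℝ) / 2)
      * (ρ * cos (θ / 2) * a + 2 * sin (θ / 2) * d) ^ 2
    + chord θ ρ * fpos (chord θ ρ) * (2 * cos (θ / 2) * a * d - ρ * sin (θ / 2) * a ^ 2 / 2)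

lemma chord_eq_sqrt {θ : ℝ} (ρ : ℝ) (hθ : θ ∈ Set.Icc 0 (2 * π)) :
    chord θ ρ = √2 * ρ * √(1 - cos θ) := by
  have hs : 0 ≤ sin (θ / 2) :=
    sin_nonneg_of_nonneg_of_le_pi (by linarith [hθ.1]) (by linarith [hθ.2])
  rw [chord, one_sub_cos_eq_two_mul_sin_half_sq, sqrt_mul zero_le_two, sqrt_sq hs]
  linear_combination (-ρ * sin (θ / 2)) * mul_self_sqrt (zero_le_two (α := ℝ))

lemma gradAngle_eq {θ : ℝ} (ρ : ℝ) (hθ : θ ∈ Set.Icc 0 (2 * π)) :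
    gradAngle θ ρ = ρ ^ 2 * sin θ * fpos (√2 * ρ * √(1 - cos θ)) := by
  rw [gradAngle, ← chord_eq_sqrt ρ hθ, chord, sin_eq_two_mul_sin_half_mul_cos_half θ]
  ring

lemma gradRadius_eq {θ : ℝ} (ρ : ℝ) (hθ : θ ∈ Set.Icc 0 (2 * π)) :
    gradRadius θ ρ = 2 * ρ * ((1 - cos θ) * fpos (√2 * ρ * √(1 - cos θ))) := by
  rw [gradRadius, ← chord_eq_sqrt ρ hθ, chord, one_sub_cos_eq_two_mul_sin_half_sq θ]
  ring

lemma gradAngle_two_pi_sub (θ ρ : ℝ) : gradAngle (2 * π - θ) ρ = -gradAngle θ ρ := by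
  have hs : sin ((2 * π - θ) / 2) = sin (θ / 2) := by
    rw [show (2 * π - θ) / 2 = π - θ / 2 by ring, sin_pi_sub]
  have hc : cos ((2 * π - θ) / 2) = -cos (θ / 2) := by
    rw [show (2 * π - θ) / 2 = π - θ / 2 by ring, cos_pi_sub]
  simp only [gradAngle, chord, hs, hc]
  ring

lemma hasDerivAt_inner_grad_line {θ₀ ρ₀ a d t : ℝ}
    (hw : 0 < chord (θ₀ + t * a) (ρ₀ + t * d) ^ 2 - chord (θ₀ + t * a) (ρ₀ + t * d) ^ 4 / 4) :
    HasDerivAt (fun s => a * gradAngle (θ₀ + s * a) (ρ₀ + s * d)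
        + d * gradRadius (θ₀ + s * a) (ρ₀ + s * d))
      (hessForm (θ₀ + t * a) (ρ₀ + t * d) a d) t := by
  have hθ : HasDerivAt (fun s => (θ₀ + s * a) / 2) (a / 2) t := by
    simpa using (((hasDerivAt_id t).mul_const a).const_add θ₀).div_const 2
  have hρ : HasDerivAt (fun s => ρ₀ + s * d) d t := by
    simpa using ((hasDerivAt_id t).mul_const d).const_add ρ₀
  have hx : HasDerivAt (fun s => chord (θ₀ + s * a) (ρ₀ + s * d))
      (2 * d * sin ((θ₀ + t * a) / 2)
        + 2 * (ρ₀ + t * d) * (cos ((θ₀ + t * a) / 2) * (a / 2))) t :=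
    (hρ.const_mul 2).mul hθ.sin
  have hφ := (hasDerivAt_mul_fpos hw).comp t hx
  refine ((((hρ.mul hθ.cos).mul hφ).const_mul a).add
    (((hθ.sin.const_mul 2).mul hφ).const_mul d)).congr_deriv ?_
  simp only [hessForm, Function.comp_apply, Pi.mul_apply]
  ring

lemma quadForm_neg_of_det_pos {p q r a d : ℝ} (hp : p < 0) (hdet : q ^ 2 < p * r)
    (had : a ≠ 0 ∨ d ≠ 0) :
    p * a ^ 2 + 2 * q * a * d + r * d ^ 2 < 0 := by
  have hsq : p * (p * a ^ 2 + 2 * q * a * d + r * d ^ 2)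
      = (p * a + q * d) ^ 2 + (p * r - q ^ 2) * d ^ 2 := by
    ring
  rcases eq_or_ne d 0 with rfl | hd
  · have ha : a ≠ 0 := had.resolve_right (not_not.mpr rfl)
    simpa using mul_neg_of_neg_of_pos hp (sq_pos_of_ne_zero ha)
  · refine neg_of_mul_pos_right ?_ hp.le
    rw [hsq]
    have := mul_pos (sub_pos.mpr hdet) (sq_pos_of_ne_zero hd)
    positivity

lemma hessForm_poly_neg {x ρ s c a d : ℝ} (hx : x = 2 * ρ * s) (hs : 0 < s)
    (hsc : s ^ 2 + c ^ 2 = 1) (hρ : 0 < ρ) (hρ2 : ρ ^ 2 < 2 / 5) (had : a ≠ 0 ∨ d ≠ 0) :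
    x ^ 2 * (5 * x ^ 2 - 8) / 4 * (ρ * c * a + 2 * s * d) ^ 2
      + x * (x ^ 2 - x ^ 4 / 4) * (2 * c * a * d - ρ * s * a ^ 2 / 2) < 0 := by
  have hx0 : 0 < x := hx ▸ by positivity
  have hxs : x ^ 2 < 8 / 5 * s ^ 2 := by rw [hx]; nlinarith [mul_pos hs hs]
  have hx2 : x ^ 2 < 8 / 5 := by nlinarith
  have hform : x ^ 2 * (5 * x ^ 2 - 8) / 4 * (ρ * c * a + 2 * s * d) ^ 2
      + x * (x ^ 2 - x ^ 4 / 4) * (2 * c * a * d - ρ * s * a ^ 2 / 2)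
      = (x ^ 2 / 4 * ((5 * x ^ 2 - 8) * ρ ^ 2 * c ^ 2 - (x ^ 2 - x ^ 4 / 4))) * a ^ 2
        + 2 * (x ^ 3 * c * (x ^ 2 - 1)) * a * d + (x ^ 2 * (5 * x ^ 2 - 8) * s ^ 2) * d ^ 2 := by
    subst hx; ring
  have hdet : (x ^ 2 / 4 * ((5 * x ^ 2 - 8) * ρ ^ 2 * c ^ 2 - (x ^ 2 - x ^ 4 / 4)))
        * (x ^ 2 * (5 * x ^ 2 - 8) * s ^ 2) - (x ^ 3 * c * (x ^ 2 - 1)) ^ 2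
      = x ^ 6 / 16 * (4 - x ^ 2) * ((8 - 5 * x ^ 2) * s ^ 2 - 3 * c ^ 2 * (3 * x ^ 2 - 4)) := by
    subst hx; ring
  -- for `3x² > 4` this rests on `s² > 5x²/8` and `(8 - 5x²)(3 - x²) > 0`
  have hbracket : 0 < (8 - 5 * x ^ 2) * s ^ 2 - 3 * c ^ 2 * (3 * x ^ 2 - 4) := by
    nlinarith [mul_pos (sub_pos.mpr hx2) (sub_pos.mpr hxs), sq_nonneg c, mul_pos hs hs,
      mul_nonneg (sq_nonneg c) (sub_nonneg.mpr hx2.le)]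
  rw [hform]
  refine quadForm_neg_of_det_pos ?_ ?_ had
  · have hw : 0 < x ^ 2 - x ^ 4 / 4 := by nlinarith
    have hρc : (5 * x ^ 2 - 8) * ρ ^ 2 * c ^ 2 ≤ 0 :=
      mul_nonpos_of_nonpos_of_nonneg (mul_nonpos_of_nonpos_of_nonneg (by linarith) (by positivity))
        (sq_nonneg c)
    exact mul_neg_of_pos_of_neg (by positivity) (by linarith)
  · rw [← sub_pos, hdet]
    have : 0 < 4 - x ^ 2 := by linarith
    positivity

lemma sq_lt_two_fifths {ρ : ℝ} (hρ : ρ ∈ Set.Ioo 0 (√10 / 5)) : ρ ^ 2 < 2 / 5 := by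
  nlinarith [hρ.1, hρ.2, sq_sqrt (show (0 : ℝ) ≤ 10 by norm_num), sqrt_nonneg 10]

lemma sin_half_pos {θ : ℝ} (hθ : θ ∈ Set.Ioo 0 (2 * π)) : 0 < sin (θ / 2) :=
  sin_pos_of_pos_of_lt_pi (by linarith [hθ.1]) (by linarith [hθ.2])

lemma chord_sq_sub_pos {θ ρ : ℝ} (hθ : θ ∈ Set.Ioo 0 (2 * π)) (hρ : ρ ∈ Set.Ioo 0 (√10 / 5)) :
    0 < chord θ ρ ^ 2 - chord θ ρ ^ 4 / 4 := by
  have hs := sin_half_pos hθ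
  have hx : 0 < chord θ ρ := by unfold chord; nlinarith [hρ.1]
  have hx2 : chord θ ρ ^ 2 < 4 := by
    unfold chord
    nlinarith [sq_lt_two_fifths hρ, sin_sq_le_one (θ / 2),
      mul_nonneg (sq_nonneg ρ) (sq_nonneg (sin (θ / 2)))]
  nlinarith [mul_pos (pow_pos hx 2) (sub_pos.mpr hx2)]

lemma hessForm_neg {θ ρ a d : ℝ} (hθ : θ ∈ Set.Ioo 0 (2 * π)) (hρ : ρ ∈ Set.Ioo 0 (√10 / 5))
    (had : a ≠ 0 ∨ d ≠ 0) : hessForm θ ρ a d < 0 := by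
  have hw := chord_sq_sub_pos hθ hρ
  have hpoly := hessForm_poly_neg (x := chord θ ρ) rfl (sin_half_pos hθ)
    (sin_sq_add_cos_sq (θ / 2)) hρ.1 (sq_lt_two_fifths hρ) had
  refine (mul_neg_of_pos_of_neg (rpow_pos_of_pos hw (-(5 : ℝ) / 2)) hpoly).trans_eq' ?_
  rw [hessForm, fpos_eq_mul_rpow hw]
  ring

noncomputable def gradPairing (θ ρ θ' ρ' : ℝ) : ℝ :=
  (θ - θ') * (gradAngle θ ρ - gradAngle θ' ρ') + (ρ - ρ') * (gradRadius θ ρ - gradRadius θ' ρ')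

lemma gradPairing_neg {θ ρ θ' ρ' : ℝ} (hθ : θ ∈ Set.Ioo 0 (2 * π)) (hθ' : θ' ∈ Set.Ioo 0 (2 * π))
    (hρ : ρ ∈ Set.Ioo 0 (√10 / 5)) (hρ' : ρ' ∈ Set.Ioo 0 (√10 / 5)) (hne : θ ≠ θ' ∨ ρ ≠ ρ') :
    gradPairing θ ρ θ' ρ' < 0 := by
  set Q := fun s => (θ - θ') * gradAngle (θ' + s * (θ - θ')) (ρ' + s * (ρ - ρ'))
    + (ρ - ρ') * gradRadius (θ' + s * (θ - θ')) (ρ' + s * (ρ - ρ'))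
  have hseg : ∀ t ∈ Set.Icc (0 : ℝ) 1, θ' + t * (θ - θ') ∈ Set.Ioo 0 (2 * π)
      ∧ ρ' + t * (ρ - ρ') ∈ Set.Ioo 0 (√10 / 5) := fun t ht =>
    ⟨(convex_Ioo _ _).add_smul_sub_mem hθ' hθ ht, (convex_Ioo _ _).add_smul_sub_mem hρ' hρ ht⟩
  have hQ : ∀ t ∈ Set.Icc (0 : ℝ) 1,
      HasDerivAt Q (hessForm (θ' + t * (θ - θ')) (ρ' + t * (ρ - ρ')) (θ - θ') (ρ - ρ')) t :=
    fun t ht => hasDerivAt_inner_grad_line (chord_sq_sub_pos (hseg t ht).1 (hseg t ht).2)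
  have hanti : StrictAntiOn Q (Set.Icc 0 1) := by
    refine strictAntiOn_of_deriv_neg (convex_Icc 0 1)
      (fun t ht => (hQ t ht).continuousAt.continuousWithinAt) fun t ht => ?_
    rw [interior_Icc] at ht
    have ht' := Set.Ioo_subset_Icc_self ht
    rw [(hQ t ht').deriv]
    exact hessForm_neg (hseg t ht').1 (hseg t ht').2 (hne.imp sub_ne_zero.mpr sub_ne_zero.mpr)
  have hlt := hanti (Set.left_mem_Icc.mpr zero_le_one) (Set.right_mem_Icc.mpr zero_le_one) zero_lt_one
  simp only [Q, zero_mul, add_zero, one_mul, add_sub_cancel] at hlt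
  rw [gradPairing]
  linarith

lemma sum_sum_mul_sub_mul_eq_zero {ι : Type*} [Fintype ι] (m δ : ι → ℝ) (T : ι → ι → ℝ)
    (hrow : ∀ i, ∑ j, m j * T i j = 0) (hanti : ∀ i j, T j i = -T i j) :
    ∑ i, ∑ j, m i * m j * ((δ j - δ i) * T i j) = 0 := by
  have hrow' : ∑ i, ∑ j, m i * m j * (δ i * T i j) = 0 := by
    simp only [fun i j => show m i * m j * (δ i * T i j) = m i * δ i * (m j * T i j) by ring,
      ← mul_sum, hrow, mul_zero, sum_const_zero]
  have hcol : ∑ i, ∑ j, m i * m j * (δ j * T i j) = -∑ i, ∑ j, m i * m j * (δ i * T i j) := by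
    rw [sum_comm, ← sum_neg_distrib]
    refine sum_congr rfl fun i _ => ?_
    rw [← sum_neg_distrib]
    refine sum_congr rfl fun j _ => ?_
    rw [hanti]
    ring
  simp only [sub_mul, mul_sub, sum_sub_distrib, hcol, hrow', neg_zero, sub_zero]

lemma sum_sum_mul_mul_eq {ι : Type*} [Fintype ι] (m : ι → ℝ) (R : ι → ι → ℝ) (c : ℝ)
    (hrow : ∀ i, ∑ j, m j * R i j = c) : ∑ i, ∑ j, m i * m j * R i j = c * ∑ i, m i := by
  simp only [mul_assoc, ← mul_sum, hrow, ← sum_mul, mul_comm c]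

section AngleGap

variable {n : ℕ}

/-- The counterclockwise angle from `α i` to `α j`, reduced to `[0, 2π)` when `α` is increasing
with values in `[0, 2π)`. -/
noncomputable def angleGap (α : Fin n → ℝ) (i j : Fin n) : ℝ :=
  α j - α i + if j < i then 2 * π else 0

@[simp]
lemma angleGap_self (α : Fin n → ℝ) (i : Fin n) : angleGap α i i = 0 := by
  simp [angleGap]

lemma angleGap_sub_angleGap (α α' : Fin n → ℝ) (i j : Fin n) :
    angleGap α i j - angleGap α' i j = (α j - α' j) - (α i - α' i) := by
  simp only [angleGap]
  ring

lemma angleGap_swap (α : Fin n → ℝ) {i j : Fin n} (hij : i ≠ j) :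
    angleGap α j i = 2 * π - angleGap α i j := by
  rcases hij.lt_or_gt with h | h
  · simp only [angleGap, if_pos h, if_neg h.asymm]
    ring
  · simp only [angleGap, if_pos h, if_neg h.asymm]
    ring

lemma sin_angleGap (α : Fin n → ℝ) (i j : Fin n) : sin (angleGap α i j) = sin (α j - α i) := by
  unfold angleGap
  split_ifs <;> simp [sin_add_two_pi]

lemma cos_angleGap (α : Fin n → ℝ) (i j : Fin n) : cos (angleGap α i j) = cos (α j - α i) := by
  unfold angleGap
  split_ifs <;> simp [cos_add_two_pi]

lemma angleGap_mem_Icc {α : Fin n → ℝ} (hα : ∀ i, α i ∈ Set.Ico 0 (2 * π)) (hmono : Monotone α)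
    (i j : Fin n) :
    angleGap α i j ∈ Set.Icc 0 (2 * π) := by
  obtain ⟨⟨hi₀, hi₁⟩, hj₀, hj₁⟩ := And.intro (hα i) (hα j)
  unfold angleGap
  split_ifs with h
  · have := hmono h.le
    constructor <;> linarith
  · have := hmono (not_lt.mp h)
    constructor <;> linarith

lemma angleGap_mem_Ioo {α : Fin n → ℝ} (hα : ∀ i, α i ∈ Set.Ico 0 (2 * π))
    (hmono : StrictMono α) {i j : Fin n} (hij : i ≠ j) :
    angleGap α i j ∈ Set.Ioo 0 (2 * π) := by
  obtain ⟨⟨hi₀, hi₁⟩, hj₀, hj₁⟩ := And.intro (hα i) (hα j)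
  unfold angleGap
  split_ifs with h
  · have := hmono h
    constructor <;> linarith
  · have := hmono ((not_lt.mp h).lt_of_ne hij)
    constructor <;> linarith

lemma gradAngle_angleGap_swap (α : Fin n → ℝ) (r : ℝ) (i j : Fin n) :
    gradAngle (angleGap α j i) r = -gradAngle (angleGap α i j) r := by
  rcases eq_or_ne i j with rfl | hij
  · simp [gradAngle, chord]
  · rw [angleGap_swap α hij, gradAngle_two_pi_sub]

end AngleGap

def IsPolygonalRelEquilibrium {n : ℕ} (m : Fin n → ℝ) (A r : ℝ) (α : Fin n → ℝ) : Prop :=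
  ∀ i : Fin n,
    A ^ 2 = (∑ j ∈ Finset.univ.erase i,
        m j * (1 - Real.cos (α j - α i)) *
          fpos (Real.sqrt 2 * r * Real.sqrt (1 - Real.cos (α j - α i)))) ∧
    0 = ∑ j ∈ Finset.univ.erase i,
        m j * Real.sin (α j - α i) *
          fpos (Real.sqrt 2 * r * Real.sqrt (1 - Real.cos (α j - α i)))

section Equilibrium

variable {n : ℕ} {m : Fin n → ℝ} {A r r' : ℝ} {α α' : Fin n → ℝ}

lemma IsPolygonalRelEquilibrium.sum_gradAngle (h : IsPolygonalRelEquilibrium m A r α)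
    (hα : ∀ i, α i ∈ Set.Ico 0 (2 * π)) (hmono : Monotone α) (i : Fin n) :
    ∑ j, m j * gradAngle (angleGap α i j) r = 0 := by
  simp only [gradAngle_eq r (angleGap_mem_Icc hα hmono i _), sin_angleGap, cos_angleGap]
  rw [← sum_erase (a := i) _ (by simp), ← mul_zero (r ^ 2), (h i).2, mul_sum]
  exact sum_congr rfl fun j _ => by ring

lemma IsPolygonalRelEquilibrium.sum_gradRadius (h : IsPolygonalRelEquilibrium m A r α)
    (hα : ∀ i, α i ∈ Set.Ico 0 (2 * π)) (hmono : Monotone α) (i : Fin n) :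
    ∑ j, m j * gradRadius (angleGap α i j) r = 2 * r * A ^ 2 := by
  simp only [gradRadius_eq r (angleGap_mem_Icc hα hmono i _), cos_angleGap]
  rw [← sum_erase (a := i) _ (by simp), (h i).1, mul_sum]
  exact sum_congr rfl fun j _ => by ring

lemma sum_gradPairing_angleGap (h : IsPolygonalRelEquilibrium m A r α)
    (h' : IsPolygonalRelEquilibrium m A r' α')
    (hα : ∀ i, α i ∈ Set.Ico 0 (2 * π)) (hmono : Monotone α)
    (hα' : ∀ i, α' i ∈ Set.Ico 0 (2 * π)) (hmono' : Monotone α') :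
    ∑ i, ∑ j, m i * m j * gradPairing (angleGap α i j) r (angleGap α' i j) r'
      = 2 * A ^ 2 * (∑ i, m i) * (r - r') ^ 2 := by
  set δ := fun i => α i - α' i
  have hsplit : ∀ i j, m i * m j * gradPairing (angleGap α i j) r (angleGap α' i j) r'
      = m i * m j * ((δ j - δ i) * gradAngle (angleGap α i j) r)
        - m i * m j * ((δ j - δ i) * gradAngle (angleGap α' i j) r')
        + (r - r') * (m i * m j * gradRadius (angleGap α i j) r)
        - (r - r') * (m i * m j * gradRadius (angleGap α' i j) r') := by
    intro i j
    rw [gradPairing, angleGap_sub_angleGap]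
    ring
  simp only [hsplit, sum_add_distrib, sum_sub_distrib, ← mul_sum,
    sum_sum_mul_sub_mul_eq_zero m δ _ (h.sum_gradAngle hα hmono) (gradAngle_angleGap_swap α r),
    sum_sum_mul_sub_mul_eq_zero m δ _ (h'.sum_gradAngle hα' hmono')
      (gradAngle_angleGap_swap α' r'),
    sum_sum_mul_mul_eq m _ _ (h.sum_gradRadius hα hmono),
    sum_sum_mul_mul_eq m _ _ (h'.sum_gradRadius hα' hmono')]
  ring

lemma gradPairing_angleGap_nonpos (hα : ∀ i, α i ∈ Set.Ico 0 (2 * π)) (hmono : StrictMono α)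
    (hα' : ∀ i, α' i ∈ Set.Ico 0 (2 * π)) (hmono' : StrictMono α')
    (hr : r ∈ Set.Ioo 0 (√10 / 5)) (hr' : r' ∈ Set.Ioo 0 (√10 / 5)) (i j : Fin n) :
    gradPairing (angleGap α i j) r (angleGap α' i j) r' ≤ 0 := by
  rcases eq_or_ne i j with rfl | hij
  · simp [gradPairing, gradRadius, chord]
  by_cases heq : angleGap α i j = angleGap α' i j ∧ r = r'
  · simp [gradPairing, heq.1, heq.2]
  · exact (gradPairing_neg (angleGap_mem_Ioo hα hmono hij) (angleGap_mem_Ioo hα' hmono' hij)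
      hr hr' (not_and_or.mp heq)).le

lemma angleGap_eq_of_gradPairing_eq_zero (hα : ∀ i, α i ∈ Set.Ico 0 (2 * π))
    (hmono : StrictMono α) (hα' : ∀ i, α' i ∈ Set.Ico 0 (2 * π)) (hmono' : StrictMono α')
    (hr : r ∈ Set.Ioo 0 (√10 / 5)) (hr' : r' ∈ Set.Ioo 0 (√10 / 5)) {i j : Fin n} (hij : i ≠ j)
    (h : gradPairing (angleGap α i j) r (angleGap α' i j) r' = 0) :
    angleGap α i j = angleGap α' i j := by
  by_contra hne
  exact (gradPairing_neg (angleGap_mem_Ioo hα hmono hij) (angleGap_mem_Ioo hα' hmono' hij)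
    hr hr' (Or.inl hne)).ne h

end Equilibrium

lemma mem_Ico_of_monotone {n : ℕ} {α : Fin n → ℝ} {b : ℝ} (hn : 0 < n) (h0 : α ⟨0, hn⟩ = 0)
    (hmono : Monotone α) (hb : ∀ i, α i < b) (i : Fin n) : α i ∈ Set.Ico 0 b :=
  ⟨h0 ▸ hmono (Nat.zero_le i.val), hb i⟩

/-- For `σ = 1`, fixed masses `m₁,…,mₙ > 0` and fixed angular velocity `A > 0`,
there is at most one tuple `(r, α₁,…,αₙ)` with `0 < r < (1/5)√10` and
`0 = α₁ < α₂ < … < αₙ < 2π` solving the polygonal positive elliptic relative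
equilibrium system
`A² = Σ_{j≠i} m_j (1 − cos(α_j−α_i)) f(√2 r √(1−cos(α_j−α_i)))`,
`0 = Σ_{j≠i} m_j sin(α_j−α_i) f(√2 r √(1−cos(α_j−α_i)))`. -/
theorem positive_elliptic_relative_equilibrium_unique
    (n : ℕ) (hn : 2 ≤ n) (m : Fin n → ℝ) (hm : ∀ i, 0 < m i)
    (A : ℝ) (hA : 0 < A)
    (r r' : ℝ) (α α' : Fin n → ℝ)
    (hr : 0 < r) (hrlt : r < Real.sqrt 10 / 5)
    (hr' : 0 < r') (hr'lt : r' < Real.sqrt 10 / 5)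
    (hα0 : α ⟨0, by omega⟩ = 0) (hα'0 : α' ⟨0, by omega⟩ = 0)
    (hαmono : StrictMono α) (hα'mono : StrictMono α')
    (hα2π : ∀ i, α i < 2 * π) (hα'2π : ∀ i, α' i < 2 * π)
    (hsys : ∀ i : Fin n,
      A ^ 2 = (∑ j ∈ Finset.univ.erase i,
          m j * (1 - Real.cos (α j - α i)) *
            fpos (Real.sqrt 2 * r * Real.sqrt (1 - Real.cos (α j - α i)))) ∧
      0 = ∑ j ∈ Finset.univ.erase i,
          m j * Real.sin (α j - α i) *
            fpos (Real.sqrt 2 * r * Real.sqrt (1 - Real.cos (α j - α i))))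
    (hsys' : ∀ i : Fin n,
      A ^ 2 = (∑ j ∈ Finset.univ.erase i,
          m j * (1 - Real.cos (α' j - α' i)) *
            fpos (Real.sqrt 2 * r' * Real.sqrt (1 - Real.cos (α' j - α' i)))) ∧
      0 = ∑ j ∈ Finset.univ.erase i,
          m j * Real.sin (α' j - α' i) *
            fpos (Real.sqrt 2 * r' * Real.sqrt (1 - Real.cos (α' j - α' i)))) :
    r = r' ∧ ∀ i, α i = α' i := by
  set i₀ : Fin n := ⟨0, by omega⟩
  have hα := mem_Ico_of_monotone (by omega) hα0 hαmono.monotone hα2π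
  have hα' := mem_Ico_of_monotone (by omega) hα'0 hα'mono.monotone hα'2π
  have hterm : ∀ i j, m i * m j * gradPairing (angleGap α i j) r (angleGap α' i j) r' ≤ 0 :=
    fun i j => mul_nonpos_of_nonneg_of_nonpos (mul_pos (hm i) (hm j)).le
      (gradPairing_angleGap_nonpos hα hαmono hα' hα'mono ⟨hr, hrlt⟩ ⟨hr', hr'lt⟩ i j)
  have hsum := sum_gradPairing_angleGap hsys hsys' hα hαmono.monotone hα' hα'mono.monotone
  have hrr' : r = r' := by
    have hpos : 0 < 2 * A ^ 2 * ∑ i, m i := by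
      have := sum_pos (fun i _ => hm i) ⟨i₀, mem_univ i₀⟩
      positivity
    have := hsum ▸ sum_nonpos fun i _ => sum_nonpos fun j _ => hterm i j
    have hsq : (r - r') ^ 2 ≤ 0 := (mul_nonpos_iff_pos_imp_nonpos.mp this).1 hpos
    exact sub_eq_zero.mp (pow_eq_zero_iff two_ne_zero |>.mp (le_antisymm hsq (sq_nonneg _)))
  subst hrr'
  refine ⟨rfl, fun j => ?_⟩
  rcases eq_or_ne i₀ j with rfl | hj
  · rw [hα0, hα'0]
  have hzero := (sum_eq_zero_iff_of_nonpos fun j _ => hterm i₀ j).mp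
    ((sum_eq_zero_iff_of_nonpos fun i _ => sum_nonpos fun j _ => hterm i j).mp
      (hsum.trans (by ring)) i₀ (mem_univ i₀)) j (mem_univ j)
  have hgap := angleGap_eq_of_gradPairing_eq_zero hα hαmono hα' hα'mono ⟨hr, hrlt⟩ ⟨hr, hr'lt⟩
    hj ((mul_eq_zero.mp hzero).resolve_left (mul_pos (hm i₀) (hm j)).ne')
  linarith [angleGap_sub_angleGap α α' i₀ j, hα0, hα'0]
end
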